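/- arXiv:1104.1389 — 3 statements merged into one kernel-verified Lean document; each statement's English description precedes it below -/
import Mathlib

section
/- Assume the pair (A,B) is reachable. Let μ be a finite positive Borel measure on [0, 2π] and suppose Σ = ∫ (I − e^{iθ}A)⁻¹ B B* ((I − e^{iθ}A)⁻¹)* dμ(θ). Then there exists an n×n complex matrix M with M A = A M such that Σ = (1/2)(M 𝒢 + 𝒢 M*), where 𝒢 = ∑_{k=0}^∞ Aᵏ B B* (A*)ᵏ is the reachability Gramian. -/
/-!
For `‖z‖ = 1` the Stein equation `𝒢 - A 𝒢 A* = B B*` is unchanged when `A` is replaced by `z A`.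
For any `x` with `1 - x` invertible and `𝒢 - x 𝒢 x* = C`, expanding gives
`(1 - x) 𝒢 (1 + x)* + (1 + x) 𝒢 (1 - x)* = 2 C`, so conjugating by `(1 - x)⁻¹` yields
`(1 - x)⁻¹ C ((1 - x)⁻¹)* = ½ (K 𝒢 + 𝒢 K*)` with `K = (1 - x)⁻¹ (1 + x)` the Cayley transform of `x`.
Taking `x = e^{iθ} A` and integrating in `θ` gives the claim with `M = ∫ K dμ`, which commutes
with `A` because every `K` does.
-/

open Matrix MeasureTheory Filter Complex
-- Any norm on matrices would do; this one is a Banach *-algebra norm inducing the product topology.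
open scoped NNReal ENNReal Matrix.Norms.L2Operator

section Algebra

variable {R : Type*} [Ring R]

theorem Commute.ringInverse_left {M₀ : Type*} [MonoidWithZero M₀] {a b : M₀}
    (h : Commute a b) : Commute (Ring.inverse a) b := by
  by_cases ha : IsUnit a
  · obtain ⟨u, rfl⟩ := ha
    rw [Ring.inverse_unit]
    exact h.units_inv_left
  · rw [Ring.inverse_non_unit a ha]
    exact Commute.zero_left b

noncomputable def cayley (x : R) : R := Ring.inverse (1 - x) * (1 + x)

theorem Commute.cayley_left {x y : R} (h : Commute x y) : Commute (cayley x) y :=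
  ((Commute.one_left y).sub_left h).ringInverse_left.mul_left ((Commute.one_left y).add_left h)

theorem ringInverse_one_sub_mul_mul_star_eq [StarRing R] [Algebra ℂ R] {x g c : R}
    (hx : IsUnit (1 - x)) (hg : g - x * g * star x = c) :
    Ring.inverse (1 - x) * c * star (Ring.inverse (1 - x)) =
      (1 / 2 : ℂ) • (cayley x * g + g * star (cayley x)) := by
  set r := Ring.inverse (1 - x)
  have hr : r * (1 - x) = 1 := Ring.inverse_mul_cancel _ hx
  have hr_star : star (1 - x) * star r = 1 := by rw [← star_mul, hr, star_one]
  have hsum : (1 - x) * g * star (1 + x) + (1 + x) * g * star (1 - x) = (2 : ℂ) • c := by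
    rw [two_smul, ← hg]
    simp only [star_add, star_sub, star_one]
    noncomm_ring
  have hright : r * ((1 - x) * g * star (1 + x)) * star r = g * star (cayley x) := by
    calc r * ((1 - x) * g * star (1 + x)) * star r
        = (r * (1 - x)) * g * (star (1 + x) * star r) := by simp only [mul_assoc]
      _ = g * star (cayley x) := by rw [hr, one_mul, cayley, star_mul]
  have hleft : r * ((1 + x) * g * star (1 - x)) * star r = cayley x * g := by
    calc r * ((1 + x) * g * star (1 - x)) * star r
        = (r * (1 + x)) * g * (star (1 - x) * star r) := by simp only [mul_assoc]
      _ = cayley x * g := by rw [hr_star, mul_one, cayley]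
  calc r * c * star r = (1 / 2 : ℂ) • (r * ((2 : ℂ) • c) * star r) := by
        rw [mul_smul_comm, smul_mul_assoc, smul_smul]
        norm_num
    _ = (1 / 2 : ℂ) • (cayley x * g + g * star (cayley x)) := by
        rw [← hsum, mul_add, add_mul, hright, hleft, add_comm]

theorem smul_mul_mul_star_smul [StarRing R] [Algebra ℂ R] [StarModule ℂ R] {z : ℂ}
    (hz : ‖z‖ = 1) (a g : R) : z • a * g * star (z • a) = a * g * star a := by
  rw [star_smul, smul_mul_assoc, smul_mul_assoc, mul_smul_comm, smul_smul, Complex.star_def,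
    Complex.mul_conj', hz]
  simp

theorem tsum_pow_mul_mul_pow_sub [TopologicalSpace R] [IsTopologicalRing R] [T2Space R]
    {a b c : R} (h : Summable fun k : ℕ => a ^ k * c * b ^ k) :
    (∑' k : ℕ, a ^ k * c * b ^ k) - a * (∑' k : ℕ, a ^ k * c * b ^ k) * b = c := by
  have hshift : (fun k : ℕ => a ^ (k + 1) * c * b ^ (k + 1)) =
      fun k => a * (a ^ k * c * b ^ k) * b := by
    ext k
    rw [pow_succ', pow_succ]
    noncomm_ring
  nth_rw 1 [h.tsum_eq_zero_add]
  rw [hshift, (h.mul_left a).tsum_mul_right, h.tsum_mul_left]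
  simp

noncomputable def gramian [StarRing R] [TopologicalSpace R] (a c : R) : R :=
  ∑' k : ℕ, a ^ k * c * star a ^ k

end Algebra

theorem Continuous.ringInverse {R T : Type*} [NormedRing R] [CompleteSpace R] [TopologicalSpace T]
    {x : T → R} (hx : Continuous x) (h : ∀ t, IsUnit (x t)) :
    Continuous fun t => Ring.inverse (x t) := by
  refine continuous_iff_continuousAt.mpr fun t => ?_
  have hinv : ContinuousAt Ring.inverse (x t) := by
    simpa using NormedRing.inverse_continuousAt (h t).unit
  exact hinv.comp (f := x) hx.continuousAt

section BanachAlgebra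

variable {𝔸 : Type*} [NormedRing 𝔸] [NormedAlgebra ℂ 𝔸]

theorem spectrum.spectralRadius_star [StarRing 𝔸] [StarModule ℂ 𝔸] (a : 𝔸) :
    spectralRadius ℂ (star a) = spectralRadius ℂ a := by
  simp only [spectralRadius, spectrum.map_star, ← Set.image_star, iSup_image, nnnorm_star]

theorem spectrum.isUnit_one_sub_smul_of_norm_le_one {a : 𝔸} (ha : spectralRadius ℂ a < 1)
    {z : ℂ} (hz : ‖z‖ ≤ 1) : IsUnit (1 - z • a) := by
  refine spectrum.isUnit_one_sub_smul_of_lt_inv_radius ?_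
  calc (‖z‖₊ : ℝ≥0∞) ≤ 1 := mod_cast hz
    _ < (spectralRadius ℂ a)⁻¹ := ENNReal.one_lt_inv.mpr ha

variable [CompleteSpace 𝔸]

theorem spectrum.spectralRadius_lt_one_of_forall_norm_lt_one {a : 𝔸}
    (h : ∀ z ∈ spectrum ℂ a, ‖z‖ < 1) : spectralRadius ℂ a < 1 := by
  rcases (spectrum ℂ a).eq_empty_or_nonempty with hσ | hσ
  · simp [spectralRadius, hσ]
  · exact_mod_cast spectrum.spectralRadius_lt_of_forall_lt_of_nonempty hσ (r := 1)
      fun z hz => mod_cast h z hz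

theorem spectrum.eventually_nnnorm_pow_le_of_spectralRadius_lt {a : 𝔸} {r : ℝ≥0}
    (h : spectralRadius ℂ a < r) : ∀ᶠ k : ℕ in atTop, ‖a ^ k‖₊ ≤ r ^ k := by
  filter_upwards
    [(spectrum.pow_nnnorm_pow_one_div_tendsto_nhds_spectralRadius a).eventually_lt_const h,
      eventually_ge_atTop 1] with k hk hk1
  have hk0 : (k : ℝ) ≠ 0 := by positivity
  have := ENNReal.rpow_le_rpow hk.le (by positivity : (0 : ℝ) ≤ k)
  rw [← ENNReal.rpow_mul, one_div, inv_mul_cancel₀ hk0, ENNReal.rpow_one,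
    ENNReal.rpow_natCast] at this
  exact_mod_cast this

theorem summable_pow_mul_mul_pow {a b : 𝔸} (ha : spectralRadius ℂ a < 1)
    (hb : spectralRadius ℂ b < 1) (c : 𝔸) : Summable fun k : ℕ => a ^ k * c * b ^ k := by
  obtain ⟨r, hr, hr1⟩ := ENNReal.lt_iff_exists_nnreal_btwn.mp (max_lt ha hb)
  have hr1 : (r : ℝ) < 1 := mod_cast hr1
  refine Summable.of_norm_bounded_eventually_nat (g := fun k => ‖c‖ * ((r : ℝ) ^ 2) ^ k)
    ((summable_geometric_of_lt_one (by positivity) (by nlinarith [r.coe_nonneg])).mul_left _) ?_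
  filter_upwards
    [spectrum.eventually_nnnorm_pow_le_of_spectralRadius_lt ((le_max_left _ _).trans_lt hr),
      spectrum.eventually_nnnorm_pow_le_of_spectralRadius_lt ((le_max_right _ _).trans_lt hr)]
    with k hak hbk
  have hak : ‖a ^ k‖ ≤ r ^ k := mod_cast hak
  have hbk : ‖b ^ k‖ ≤ r ^ k := mod_cast hbk
  calc ‖a ^ k * c * b ^ k‖ ≤ ‖a ^ k‖ * ‖c‖ * ‖b ^ k‖ := norm_mul₃_le
    _ ≤ r ^ k * ‖c‖ * r ^ k := by gcongr
    _ = ‖c‖ * ((r : ℝ) ^ 2) ^ k := by ring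

theorem continuous_ringInverse_one_sub_exp_smul {a : 𝔸} (ha : spectralRadius ℂ a < 1) :
    Continuous fun θ : ℝ => Ring.inverse (1 - exp (θ * I) • a) :=
  Continuous.ringInverse (by fun_prop) fun θ =>
    spectrum.isUnit_one_sub_smul_of_norm_le_one ha (norm_exp_ofReal_mul_I θ).le

end BanachAlgebra

section Integral

variable {X : Type*} [MeasurableSpace X] {μ : Measure X}

theorem integral_star {E : Type*} [NormedAddCommGroup E] [NormedSpace ℝ E] [StarAddMonoid E]
    [ContinuousStar E] [StarModule ℝ E] (f : X → E) :
    ∫ x, star (f x) ∂μ = star (∫ x, f x ∂μ) :=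
  (starL' ℝ : E ≃L[ℝ] E).integral_comp_comm f

variable {𝔸 : Type*} [NormedRing 𝔸] [NormedAlgebra ℝ 𝔸]

theorem Commute.integral_left {f : X → 𝔸} (hf : Integrable f μ) {a : 𝔸}
    (h : ∀ x, Commute (f x) a) : Commute (∫ x, f x ∂μ) a := by
  rw [Commute, SemiconjBy, ← integral_mul_const_of_integrable hf,
    ← integral_const_mul_of_integrable hf]
  exact integral_congr_ae (Eventually.of_forall h)

theorem integral_mul_add_mul_star [StarRing 𝔸] [ContinuousStar 𝔸] [StarModule ℝ 𝔸]
    {f : X → 𝔸} (hf : Integrable f μ) (g : 𝔸) :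
    ∫ x, (f x * g + g * star (f x)) ∂μ = (∫ x, f x ∂μ) * g + g * star (∫ x, f x ∂μ) := by
  have hstar : Integrable (fun x => star (f x)) μ :=
    (starL' ℝ : 𝔸 ≃L[ℝ] 𝔸).toContinuousLinearMap.integrable_comp hf
  rw [integral_add (hf.mul_const g) (hstar.const_mul g), integral_mul_const_of_integrable hf,
    integral_const_mul_of_integrable hstar, integral_star]

theorem Matrix.integral_apply {m n : Type*} [Fintype m] [Fintype n] [DecidableEq n]
    {f : X → Matrix m n ℂ} (hf : Integrable f μ) (i : m) (j : n) :
    (∫ x, f x ∂μ) i j = ∫ x, f x i j ∂μ :=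
  ((entryLinearMap ℂ ℂ i j).toContinuousLinearMap.integral_comp_comm hf).symm

end Integral

theorem exists_commute_setIntegral_resolvent_eq {𝔸 : Type*} [NormedRing 𝔸] [NormedAlgebra ℂ 𝔸]
    [CompleteSpace 𝔸] [StarRing 𝔸] [StarModule ℂ 𝔸] [ContinuousStar 𝔸]
    {a : 𝔸} (ha : spectralRadius ℂ a < 1) (c : 𝔸)
    (μ : Measure ℝ) [IsFiniteMeasureOnCompacts μ] {s : Set ℝ} (hs : IsCompact s) :
    ∃ m : 𝔸, Commute m a ∧
      ∫ θ in s, Ring.inverse (1 - exp (θ * I) • a) * c *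
          star (Ring.inverse (1 - exp (θ * I) • a)) ∂μ =
        (1 / 2 : ℂ) • (m * gramian a c + gramian a c * star m) := by
  have hz : ∀ θ : ℝ, ‖exp (θ * I)‖ = 1 := norm_exp_ofReal_mul_I
  have hgram : gramian a c - a * gramian a c * star a = c :=
    tsum_pow_mul_mul_pow_sub
      (summable_pow_mul_mul_pow ha ((spectrum.spectralRadius_star a).trans_lt ha) c)
  have hK : IntegrableOn (fun θ : ℝ => cayley (exp (θ * I) • a)) s μ :=
    ((continuous_ringInverse_one_sub_exp_smul ha).mul (by fun_prop)).continuousOn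
      |>.integrableOn_compact hs
  refine ⟨_, Commute.integral_left hK fun θ => ((Commute.refl a).smul_left _).cayley_left, ?_⟩
  rw [← integral_mul_add_mul_star hK, ← integral_smul]
  refine integral_congr_ae (Eventually.of_forall fun θ => ?_)
  exact ringInverse_one_sub_mul_mul_star_eq
    (spectrum.isUnit_one_sub_smul_of_norm_le_one ha (hz θ).le)
    (by rw [smul_mul_mul_star_smul (hz θ), hgram])

theorem state_covariance_structure_general
    {n : ℕ}
    (A : Matrix (Fin n) (Fin n) ℂ) (B : Matrix (Fin n) (Fin 1) ℂ)
    (hA : ∀ μ ∈ spectrum ℂ A, ‖μ‖ < 1)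
    (μ : Measure ℝ) [IsFiniteMeasure μ]
    (S : Matrix (Fin n) (Fin n) ℂ)
    (hS : S = Matrix.of fun i j =>
      ∫ θ in Set.Icc (0:ℝ) (2 * Real.pi),
        (((1 - Complex.exp (θ * Complex.I) • A)⁻¹ * B * Bᴴ *
          ((1 - Complex.exp (θ * Complex.I) • A)⁻¹)ᴴ :
          Matrix (Fin n) (Fin n) ℂ) i j) ∂μ) :
    ∃ M : Matrix (Fin n) (Fin n) ℂ, M * A = A * M ∧
      S = (1 / 2 : ℂ) • (M * (∑' k : ℕ, A ^ k * B * Bᴴ * (Aᴴ) ^ k) +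
        (∑' k : ℕ, A ^ k * B * Bᴴ * (Aᴴ) ^ k) * Mᴴ) := by
  have hρ := spectrum.spectralRadius_lt_one_of_forall_norm_lt_one hA
  have hR := continuous_ringInverse_one_sub_exp_smul hρ
  have hint := ((hR.mul continuous_const).mul hR.star).continuousOn.integrableOn_compact
    (μ := μ) (isCompact_Icc (a := 0) (b := 2 * Real.pi)) (f := fun θ : ℝ => _ * (B * Bᴴ) * _)
  obtain ⟨M, hMA, hM⟩ := exists_commute_setIntegral_resolvent_eq hρ (B * Bᴴ) μ
    (isCompact_Icc (a := 0) (b := 2 * Real.pi))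
  refine ⟨M, hMA.eq, ?_⟩
  have hgram : ∑' k : ℕ, A ^ k * B * Bᴴ * Aᴴ ^ k = gramian A (B * Bᴴ) := by
    simp only [gramian, Matrix.mul_assoc, star_eq_conjTranspose]
  rw [hgram, hS, ← star_eq_conjTranspose, ← hM]
  ext i j
  rw [of_apply, Matrix.integral_apply hint]
  simp only [nonsing_inv_eq_ringInverse, star_eq_conjTranspose, Matrix.mul_assoc]

/-- If `(A,B)` is reachable and `Σ` is the state covariance of some finite
positive measure `μ` on `[0,2π]`, i.e.
`Σ = ∫ (I − e^{iθ}A)⁻¹ B B* ((I − e^{iθ}A)⁻¹)* dμ(θ)`, then `Σ = ½(M 𝒢 + 𝒢 M*)` for some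
matrix `M` commuting with `A`, where `𝒢` is the reachability Gramian. -/
theorem state_covariance_structure
    {n : ℕ} (hn : 1 ≤ n)
    (A : Matrix (Fin n) (Fin n) ℂ) (B : Matrix (Fin n) (Fin 1) ℂ)
    (hA : ∀ μ ∈ spectrum ℂ A, ‖μ‖ < 1)
    (hreach : IsUnit (Matrix.of fun (i : Fin n) (j : Fin n) => (A ^ (j : ℕ) * B) i 0))
    (μ : Measure ℝ) [IsFiniteMeasure μ]
    (S : Matrix (Fin n) (Fin n) ℂ)
    (hS : S = Matrix.of fun i j =>
      ∫ θ in Set.Icc (0:ℝ) (2 * Real.pi),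
        (((1 - Complex.exp (θ * Complex.I) • A)⁻¹ * B * Bᴴ *
          ((1 - Complex.exp (θ * Complex.I) • A)⁻¹)ᴴ :
          Matrix (Fin n) (Fin n) ℂ) i j) ∂μ) :
    ∃ M : Matrix (Fin n) (Fin n) ℂ, M * A = A * M ∧
      S = (1 / 2 : ℂ) • (M * (∑' k : ℕ, A ^ k * B * Bᴴ * (Aᴴ) ^ k) +
        (∑' k : ℕ, A ^ k * B * Bᴴ * (Aᴴ) ^ k) * Mᴴ) :=
  state_covariance_structure_general A B hA μ S hS
end

section
/- Assume the pair (A,B) is reachable. If M₁ and M₂ are n×n complex matrices that both commute with A and satisfy (1/2)(M₁ 𝒢 + 𝒢 M₁*) = (1/2)(M₂ 𝒢 + 𝒢 M₂*), where 𝒢 = ∑_{k=0}^∞ Aᵏ B B* (A*)ᵏ is the reachability Gramian, then there exists a real number α such that M₁ − M₂ = iα·I; that is, the representing matrix M is unique modulo an additive purely imaginary multiple of the identity. -/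
/-!
Put `N = M₁ - M₂`. The Gramian solves the Stein equation `𝒢 = BB* + A𝒢A*`, and since `N`
commutes with `A`, the matrix `P = N𝒢 + 𝒢N*` satisfies `P = (NBB* + BB*N*) + APA*`. The
hypothesis says `P = 0`, so `NBB* + BB*N* = 0`, which for a column `B` forces `NB = iαB` with
`α` real. Commuting `N` past the powers of `A` gives `NΓ = iαΓ` for the controllability
matrix `Γ`, and `Γ` is invertible.
-/

open Matrix Filter

section BanachAlgebra

variable {A : Type*} [NormedRing A] [NormedAlgebra ℂ A] [CompleteSpace A]

theorem spectralRadius_lt_one_of_forall_norm_lt_one {a : A}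
    (ha : ∀ μ ∈ spectrum ℂ a, ‖μ‖ < 1) : spectralRadius ℂ a < 1 := by
  rcases (spectrum ℂ a).eq_empty_or_nonempty with h | h
  · simp [spectralRadius, h]
  · simpa using spectrum.spectralRadius_lt_of_forall_lt_of_nonempty h (r := 1)
      fun μ hμ => by exact_mod_cast ha μ hμ

theorem exists_lt_one_eventually_norm_pow_le {a : A} (ha : spectralRadius ℂ a < 1) :
    ∃ r : ℝ, 0 ≤ r ∧ r < 1 ∧ ∀ᶠ k : ℕ in atTop, ‖a ^ k‖ ≤ r ^ k := by
  obtain ⟨r, hρr, hr1⟩ := exists_between ha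
  lift r to NNReal using ne_top_of_lt hr1
  refine ⟨r, r.2, by exact_mod_cast hr1, ?_⟩
  have hev :=
    (spectrum.pow_nnnorm_pow_one_div_tendsto_nhds_spectralRadius a).eventually_lt_const hρr
  filter_upwards [hev, eventually_ne_atTop 0] with k hk hk0
  have := ENNReal.rpow_le_rpow hk.le (Nat.cast_nonneg k : (0 : ℝ) ≤ k)
  rw [← ENNReal.rpow_mul, one_div_mul_cancel (by exact_mod_cast hk0), ENNReal.rpow_one,
    ENNReal.rpow_natCast, ← ENNReal.coe_pow, ENNReal.coe_le_coe] at this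
  exact_mod_cast this

theorem summable_pow_mul_mul_star_pow [StarRing A] [NormedStarGroup A] {a : A}
    (ha : spectralRadius ℂ a < 1) (x : A) : Summable fun k : ℕ => a ^ k * x * star a ^ k := by
  obtain ⟨r, hr0, hr1, hev⟩ := exists_lt_one_eventually_norm_pow_le ha
  have hr2 : r ^ 2 < 1 := by nlinarith
  refine .of_norm_bounded_eventually_nat
    ((summable_geometric_of_lt_one (by positivity) hr2).mul_left ‖x‖) ?_
  filter_upwards [hev] with k hk
  calc ‖a ^ k * x * star a ^ k‖ ≤ ‖a ^ k‖ * ‖x‖ * ‖a ^ k‖ := by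
        rw [← star_pow]
        refine (norm_mul_le _ _).trans ?_
        rw [norm_star]
        gcongr
        exact norm_mul_le _ _
    _ ≤ r ^ k * ‖x‖ * r ^ k := by gcongr
    _ = ‖x‖ * (r ^ 2) ^ k := by ring

end BanachAlgebra

theorem tsum_pow_mul_mul_pow_eq {R : Type*} [Ring R] [TopologicalSpace R] [IsTopologicalRing R]
    [T2Space R] {a b x : R} (h : Summable fun k : ℕ => a ^ k * x * b ^ k) :
    ∑' k : ℕ, a ^ k * x * b ^ k = x + a * (∑' k : ℕ, a ^ k * x * b ^ k) * b := by
  nth_rewrite 1 [h.tsum_eq_zero_add]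
  rw [← h.tsum_mul_left a, ← (h.mul_left a).tsum_mul_right b]
  congr 1
  · simp
  · exact tsum_congr fun k => by rw [pow_succ', pow_succ]; simp only [mul_assoc]

theorem Commute.mul_add_mul_star_eq {R : Type*} [Ring R] [StarRing R] {n a g q : R}
    (hna : Commute n a) (hg : g = q + a * g * star a) :
    n * g + g * star n = (n * q + q * star n) + a * (n * g + g * star n) * star a := by
  have hna' : star n * star a = star a * star n := hna.star_star.eq
  conv_lhs => rw [hg]
  simp only [mul_add, add_mul, ← mul_assoc, hna.eq]
  simp only [mul_assoc, hna']
  abel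

namespace Matrix

variable {m : Type*} [Fintype m]

open scoped Matrix.Norms.L2Operator in
theorem summable_pow_mul_mul_conjTranspose_pow [DecidableEq m]
    {A : Matrix m m ℂ} (hA : ∀ μ ∈ spectrum ℂ A, ‖μ‖ < 1) (X : Matrix m m ℂ) :
    Summable fun k : ℕ => A ^ k * X * Aᴴ ^ k :=
  summable_pow_mul_mul_star_pow (spectralRadius_lt_one_of_forall_norm_lt_one hA) X

theorem tsum_pow_mul_mul_conjTranspose_pow_eq [DecidableEq m]
    {A : Matrix m m ℂ} (hA : ∀ μ ∈ spectrum ℂ A, ‖μ‖ < 1) (X : Matrix m m ℂ) :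
    ∑' k : ℕ, A ^ k * X * Aᴴ ^ k = X + A * (∑' k : ℕ, A ^ k * X * Aᴴ ^ k) * Aᴴ :=
  tsum_pow_mul_mul_pow_eq (summable_pow_mul_mul_conjTranspose_pow hA X)

theorem exists_eq_smul_of_mul_conjTranspose_add_eq_zero {v b : Matrix m (Fin 1) ℂ} (hb : b ≠ 0)
    (h : v * bᴴ + b * vᴴ = 0) :
    ∃ α : ℝ, v = ((α : ℂ) * Complex.I) • b := by
  have hij (i j : m) : v i 0 * star (b j 0) + b i 0 * star (v j 0) = 0 := by
    simpa [mul_apply] using congr_fun₂ h i j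
  obtain ⟨i₀, hb₀⟩ : ∃ i, b i 0 ≠ 0 := by
    by_contra! h0
    exact hb (ext fun i j => by rw [Subsingleton.elim j 0, h0, zero_apply])
  set μ : ℂ := -star (v i₀ 0) / star (b i₀ 0)
  have hsb₀ : star (b i₀ 0) ≠ 0 := star_ne_zero.mpr hb₀
  have hv (i : m) : v i 0 = μ * b i 0 := by
    rw [div_mul_eq_mul_div, eq_div_iff hsb₀]
    linear_combination hij i i₀
  have hμ : μ.re = 0 := by
    have h₀ := hij i₀ i₀
    rw [hv i₀, star_mul'] at h₀
    have : (μ + star μ) * (b i₀ 0 * star (b i₀ 0)) = 0 := by linear_combination h₀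
    have := (mul_eq_zero.mp this).resolve_right (mul_ne_zero hb₀ hsb₀)
    rw [Complex.star_def, Complex.add_conj] at this
    simpa using this
  refine ⟨μ.im, ext fun i j => ?_⟩
  rw [Subsingleton.elim j 0, smul_apply, hv i, smul_eq_mul]
  congr 1
  apply Complex.ext <;> simp [hμ]

theorem exists_mul_eq_smul_of_mul_add_mul_conjTranspose_eq_zero
    {N : Matrix m m ℂ} {b : Matrix m (Fin 1) ℂ} (h : N * (b * bᴴ) + b * bᴴ * Nᴴ = 0) :
    ∃ α : ℝ, N * b = ((α : ℂ) * Complex.I) • b := by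
  rcases eq_or_ne b 0 with rfl | hb
  · exact ⟨0, by simp⟩
  · refine exists_eq_smul_of_mul_conjTranspose_add_eq_zero hb ?_
    simpa only [conjTranspose_mul, Matrix.mul_assoc] using h

end Matrix

def controllabilityMatrix {R : Type*} [Semiring R] {n : ℕ} (A : Matrix (Fin n) (Fin n) R)
    (B : Matrix (Fin n) (Fin 1) R) : Matrix (Fin n) (Fin n) R :=
  Matrix.of fun i j => (A ^ (j : ℕ) * B) i 0

section Controllability

variable {R : Type*} {n : ℕ} {A N : Matrix (Fin n) (Fin n) R} {B : Matrix (Fin n) (Fin 1) R}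

theorem mul_controllabilityMatrix_of_commute [Semiring R] (hNA : Commute N A) :
    N * controllabilityMatrix A B = controllabilityMatrix A (N * B) := by
  ext i j
  have : (N * controllabilityMatrix A B) i j = (N * (A ^ (j : ℕ) * B)) i 0 := by
    simp [controllabilityMatrix, mul_apply]
  rw [this, ← Matrix.mul_assoc, (hNA.pow_right _).eq, Matrix.mul_assoc]
  rfl

theorem controllabilityMatrix_smul [CommSemiring R] (c : R) :
    controllabilityMatrix A (c • B) = c • controllabilityMatrix A B := by
  ext i j
  simp [controllabilityMatrix]

theorem eq_smul_one_of_mul_eq_smul_of_isUnit_controllabilityMatrix [CommSemiring R] {c : R}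
    (hΓ : IsUnit (controllabilityMatrix A B)) (hNA : Commute N A) (hNB : N * B = c • B) :
    N = c • 1 :=
  hΓ.mul_right_cancel <| by
    rw [mul_controllabilityMatrix_of_commute hNA, hNB, controllabilityMatrix_smul, smul_one_mul]

end Controllability

theorem representing_matrix_unique_mod_imaginary_general
    {n : ℕ}
    (A : Matrix (Fin n) (Fin n) ℂ) (B : Matrix (Fin n) (Fin 1) ℂ)
    (hA : ∀ μ ∈ spectrum ℂ A, ‖μ‖ < 1)
    (hreach : IsUnit (Matrix.of fun (i : Fin n) (j : Fin n) => (A ^ (j : ℕ) * B) i 0))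
    (M₁ M₂ : Matrix (Fin n) (Fin n) ℂ)
    (hM₁ : M₁ * A = A * M₁) (hM₂ : M₂ * A = A * M₂)
    (heq : (1 / 2 : ℂ) • (M₁ * (∑' k : ℕ, A ^ k * B * Bᴴ * (Aᴴ) ^ k) +
        (∑' k : ℕ, A ^ k * B * Bᴴ * (Aᴴ) ^ k) * M₁ᴴ) =
      (1 / 2 : ℂ) • (M₂ * (∑' k : ℕ, A ^ k * B * Bᴴ * (Aᴴ) ^ k) +
        (∑' k : ℕ, A ^ k * B * Bᴴ * (Aᴴ) ^ k) * M₂ᴴ)) :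
    ∃ α : ℝ, M₁ - M₂ = ((α : ℂ) * Complex.I) • (1 : Matrix (Fin n) (Fin n) ℂ) := by
  set G := ∑' k : ℕ, A ^ k * B * Bᴴ * (Aᴴ) ^ k
  have hStein : G = B * Bᴴ + A * G * Aᴴ := by
    have hG : G = ∑' k : ℕ, A ^ k * (B * Bᴴ) * Aᴴ ^ k :=
      tsum_congr fun k => by rw [Matrix.mul_assoc (A ^ k)]
    rw [hG]
    exact tsum_pow_mul_mul_conjTranspose_pow_eq hA _
  have hNA : Commute (M₁ - M₂) A := Commute.sub_left hM₁ hM₂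
  have hP : (M₁ - M₂) * G + G * (M₁ - M₂)ᴴ = 0 := by
    have h := smul_right_injective _ (by norm_num : (1 / 2 : ℂ) ≠ 0) heq
    rw [conjTranspose_sub, sub_mul, mul_sub, ← sub_eq_zero.mpr h]
    abel
  have hBB : (M₁ - M₂) * (B * Bᴴ) + B * Bᴴ * (M₁ - M₂)ᴴ = 0 := by
    have h := hNA.mul_add_mul_star_eq hStein
    rwa [star_eq_conjTranspose, hP, mul_zero, zero_mul, add_zero, eq_comm] at h
  obtain ⟨α, hα⟩ := exists_mul_eq_smul_of_mul_add_mul_conjTranspose_eq_zero hBB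
  exact ⟨α, eq_smul_one_of_mul_eq_smul_of_isUnit_controllabilityMatrix hreach hNA hα⟩

/-- With `(A,B)` reachable, if `M₁` and `M₂` both commute with `A` and
`½(M₁ 𝒢 + 𝒢 M₁*) = ½(M₂ 𝒢 + 𝒢 M₂*)` (where `𝒢` is the reachability Gramian), then
`M₁ − M₂ = iα·I` for some real `α`. -/
theorem representing_matrix_unique_mod_imaginary
    {n : ℕ} (hn : 1 ≤ n)
    (A : Matrix (Fin n) (Fin n) ℂ) (B : Matrix (Fin n) (Fin 1) ℂ)
    (hA : ∀ μ ∈ spectrum ℂ A, ‖μ‖ < 1)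
    (hreach : IsUnit (Matrix.of fun (i : Fin n) (j : Fin n) => (A ^ (j : ℕ) * B) i 0))
    (M₁ M₂ : Matrix (Fin n) (Fin n) ℂ)
    (hM₁ : M₁ * A = A * M₁) (hM₂ : M₂ * A = A * M₂)
    (heq : (1 / 2 : ℂ) • (M₁ * (∑' k : ℕ, A ^ k * B * Bᴴ * (Aᴴ) ^ k) +
        (∑' k : ℕ, A ^ k * B * Bᴴ * (Aᴴ) ^ k) * M₁ᴴ) =
      (1 / 2 : ℂ) • (M₂ * (∑' k : ℕ, A ^ k * B * Bᴴ * (Aᴴ) ^ k) +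
        (∑' k : ℕ, A ^ k * B * Bᴴ * (Aᴴ) ^ k) * M₂ᴴ)) :
    ∃ α : ℝ, M₁ - M₂ = ((α : ℂ) * Complex.I) • (1 : Matrix (Fin n) (Fin n) ℂ) :=
  representing_matrix_unique_mod_imaginary_general A B hA hreach M₁ M₂ hM₁ hM₂ heq
end

section
/- Let a and b be complex polynomials such that a(z) ≠ 0 for every z in the closed unit disc, and let W(z) = b(z)/a(z). Denote by ā and b̄ the polynomials obtained by conjugating each coefficient. Then ā(A) is invertible and (1/2π) ∫₀^{2π} conj(W(e^{iθ})) (I − e^{iθ}A)⁻¹ B dθ = b̄(A) · ā(A)⁻¹ · B. -/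
/-!
The polynomial `ā` has no zeros on a disc of radius `> 1`, so `b̄ / ā` has a power series
`∑ cₖ zᵏ` with absolutely summable coefficients, and `conj (W (e^{iθ})) = ∑ cₖ e^{-ikθ}`.
By Gelfand's formula the spectral radius of `A` is `< 1`, so `∑ ‖Aᵏ‖ < ∞` and
`(I - e^{iθ} A)⁻¹ = ∑ e^{ikθ} Aᵏ`. Integrating the product termwise, orthogonality of the
characters `e^{i(k-m)θ}` leaves `∑ cₖ Aᵏ B`. Comparing coefficients in `ā · (b̄ / ā) = b̄` gives
`ā(A) · ∑ cₖ Aᵏ = b̄(A)`, and `ā(A)` is invertible by the spectral mapping theorem.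
-/

open Matrix Polynomial
open Filter Topology Metric Finset Complex MeasureTheory
open scoped NNReal ENNReal

attribute [local instance] Matrix.linftyOpNormedAddCommGroup Matrix.linftyOpNormedRing
  Matrix.linftyOpNormedAlgebra

section BanachAlgebra

variable {𝕜 A : Type*} [NormedField 𝕜] [NormedRing A] [NormedAlgebra 𝕜 A]

theorem Polynomial.hasSum_coeff_smul_pow (p : 𝕜[X]) (x : A) :
    HasSum (fun n => p.coeff n • x ^ n) (aeval x p) := by
  rw [aeval_eq_sum_range]
  exact hasSum_sum_of_ne_finset_zero fun n hn => by
    rw [coeff_eq_zero_of_natDegree_lt (by simpa using hn), zero_smul]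

theorem summable_norm_smul_pow {c : ℕ → 𝕜} {x : A} (hc : Summable (‖c ·‖))
    (hx : Summable (‖x ^ ·‖)) : Summable fun k => ‖c k • x ^ k‖ :=
  (hx.mul_left (∑' j, ‖c j‖)).of_nonneg_of_le (fun _ => norm_nonneg _) fun k =>
    (norm_smul_le _ _).trans <|
      mul_le_mul_of_nonneg_right (hc.le_tsum k fun _ _ => norm_nonneg _) (norm_nonneg _)

variable [CompleteSpace A]

theorem Polynomial.hasSum_antidiagonal_smul_pow (p : 𝕜[X]) {c : ℕ → 𝕜} {x : A}
    (hc : Summable fun k => ‖c k • x ^ k‖) :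
    HasSum (fun n => (∑ ij ∈ antidiagonal n, p.coeff ij.1 * c ij.2) • x ^ n)
      (aeval x p * ∑' k, c k • x ^ k) := by
  have hp : Summable fun k => ‖p.coeff k • x ^ k‖ :=
    summable_of_ne_finset_zero (s := range (p.natDegree + 1)) fun n hn => by
      rw [coeff_eq_zero_of_natDegree_lt (by simpa using hn), zero_smul, norm_zero]
  rw [← (p.hasSum_coeff_smul_pow x).tsum_eq,
    tsum_mul_tsum_eq_tsum_sum_antidiagonal_of_summable_norm hp hc]
  have hterm : ∀ n, ∑ ij ∈ antidiagonal n, p.coeff ij.1 • x ^ ij.1 * (c ij.2 • x ^ ij.2) =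
      (∑ ij ∈ antidiagonal n, p.coeff ij.1 * c ij.2) • x ^ n := fun n => by
    rw [sum_smul]
    refine sum_congr rfl fun ij hij => ?_
    rw [smul_mul_smul_comm, ← pow_add, mem_antidiagonal.1 hij]
  simpa only [hterm] using
    (summable_norm_sum_mul_antidiagonal_of_summable_norm hp hc).of_norm.hasSum

theorem aeval_mul_inverse_eq_tsum_smul_pow {p q : 𝕜[X]} {c : ℕ → 𝕜} {x : A}
    (hc : Summable fun k => ‖c k • x ^ k‖)
    (hcoeff : ∀ n, ∑ ij ∈ antidiagonal n, q.coeff ij.1 * c ij.2 = p.coeff n)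
    (hq : IsUnit (aeval x q)) :
    aeval x p * Ring.inverse (aeval x q) = ∑' k, c k • x ^ k := by
  have hmul : aeval x q * ∑' k, c k • x ^ k = aeval x p :=
    (q.hasSum_antidiagonal_smul_pow hc).unique <| by
      simpa only [hcoeff] using p.hasSum_coeff_smul_pow x
  obtain ⟨u, hu⟩ := hq
  have hcomm : Commute (aeval x p) ↑u⁻¹ :=
    (hu ▸ (Commute.all p q).map (aeval x)).units_inv_right
  rw [← hu, Ring.inverse_unit, hcomm.eq, ← hmul, ← hu, Units.inv_mul_cancel_left]

theorem hasSum_smul_pow_ringInverse_one_sub {x : A} (hx : Summable (‖x ^ ·‖))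
    {z : 𝕜} (hz : ‖z‖ ≤ 1) :
    HasSum (fun k => z ^ k • x ^ k) (Ring.inverse (1 - z • x)) := by
  have hs : Summable ((z • x) ^ ·) := by
    refine Summable.of_norm_bounded hx fun k => ?_
    rw [_root_.smul_pow, norm_smul, norm_pow]
    exact mul_le_of_le_one_left (norm_nonneg _) (pow_le_one₀ (norm_nonneg z) hz)
  let u : Aˣ := ⟨1 - z • x, ∑' k, (z • x) ^ k, hs.one_sub_mul_tsum_pow, hs.tsum_pow_mul_one_sub⟩
  rw [show Ring.inverse (1 - z • x) = ∑' k, (z • x) ^ k from Ring.inverse_unit u]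
  simpa only [_root_.smul_pow] using hs.hasSum

end BanachAlgebra

section ComplexBanachAlgebra

variable {A : Type*} [NormedRing A] [NormedAlgebra ℂ A] [CompleteSpace A]

theorem summable_norm_pow_of_forall_spectrum_norm_lt_one {a : A}
    (ha : ∀ z ∈ spectrum ℂ a, ‖z‖ < 1) : Summable (‖a ^ ·‖) := by
  nontriviality A
  have hρ : spectralRadius ℂ a < 1 :=
    mod_cast spectrum.spectralRadius_lt_of_forall_lt a (r := 1) fun z hz => mod_cast ha z hz
  obtain ⟨r, hρr, hr⟩ := ENNReal.lt_iff_exists_nnreal_btwn.1 hρ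
  refine (NNReal.summable_coe.2 (NNReal.summable_geometric (mod_cast hr)))
    |>.of_norm_bounded_eventually_nat ?_
  filter_upwards [(spectrum.pow_nnnorm_pow_one_div_tendsto_nhds_spectralRadius a).eventually
    (gt_mem_nhds hρr), eventually_gt_atTop 0] with n hn hn0
  rw [one_div, ENNReal.rpow_inv_lt_iff (by positivity), ENNReal.rpow_natCast] at hn
  rw [Real.norm_of_nonneg (norm_nonneg _), ← coe_nnnorm]
  exact_mod_cast hn.le

theorem isUnit_aeval_of_eval_ne_zero_on_spectrum {a : A} {p : ℂ[X]}
    (hp : ∀ z ∈ spectrum ℂ a, p.eval z ≠ 0) : IsUnit (aeval a p) := by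
  nontriviality A
  rw [← spectrum.zero_notMem_iff ℂ, spectrum.map_polynomial_aeval]
  rintro ⟨z, hz, hz0⟩
  exact hp z hz hz0

end ComplexBanachAlgebra

section PowerSeries

theorem Polynomial.eval_map_conj (p : ℂ[X]) (z : ℂ) :
    (p.map (starRingEnd ℂ)).eval ((starRingEnd ℂ) z) = (starRingEnd ℂ) (p.eval z) := by
  rw [eval_map, eval₂_hom]

theorem eq_of_hasSum_mul_pow {c d : ℕ → ℂ} {f : ℂ → ℂ}
    (hc : ∀ᶠ z in 𝓝 0, HasSum (fun n => c n * z ^ n) (f z))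
    (hd : ∀ᶠ z in 𝓝 0, HasSum (fun n => d n * z ^ n) (f z)) : c = d := by
  have hseries : ∀ e : ℕ → ℂ, (∀ᶠ z in 𝓝 0, HasSum (fun n => e n * z ^ n) (f z)) →
      HasFPowerSeriesAt f (FormalMultilinearSeries.ofScalars ℂ e) 0 := fun e he => by
    rw [hasFPowerSeriesAt_iff]
    filter_upwards [he] with z hz
    simpa [FormalMultilinearSeries.coeff, FormalMultilinearSeries.ofScalars, Pi.one_def, mul_comm]
      using hz
  exact (FormalMultilinearSeries.ofScalars_series_eq_iff ℂ c d).1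
    ((hseries c hc).eq_formalMultilinearSeries (hseries d hd))

theorem Polynomial.exists_one_lt_forall_closedBall_eval_ne_zero {p : ℂ[X]}
    (hp : ∀ z ∈ closedBall (0 : ℂ) 1, p.eval z ≠ 0) :
    ∃ R : ℝ≥0, 1 < R ∧ ∀ z ∈ closedBall (0 : ℂ) R, p.eval z ≠ 0 := by
  obtain ⟨δ, hδ, hsub⟩ := (isCompact_closedBall (0 : ℂ) 1).exists_cthickening_subset_open
    (isOpen_ne_fun p.continuous continuous_const) hp
  refine ⟨⟨1 + δ, by positivity⟩, lt_add_of_pos_right 1 hδ, fun z hz => hsub ?_⟩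
  rwa [cthickening_closedBall hδ.le zero_le_one, add_comm]

theorem Polynomial.exists_summable_hasSum_div (p q : ℂ[X])
    (hq : ∀ z ∈ closedBall (0 : ℂ) 1, q.eval z ≠ 0) :
    ∃ c : ℕ → ℂ, Summable (‖c ·‖) ∧
      ∀ z ∈ closedBall (0 : ℂ) 1, HasSum (fun k => c k * z ^ k) (p.eval z / q.eval z) := by
  obtain ⟨R, hR1, hR⟩ := exists_one_lt_forall_closedBall_eval_ne_zero hq
  obtain ⟨P, hf⟩ : ∃ P, HasFPowerSeriesOnBall (fun z => p.eval z / q.eval z) P 0 R :=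
    ⟨_, DifferentiableOn.hasFPowerSeriesOnBall (fun z hz => (p.differentiableAt.div
      q.differentiableAt (hR z hz)).differentiableWithinAt) (zero_lt_one.trans hR1)⟩
  refine ⟨P.coeff, ?_, fun z hz => ?_⟩
  · simpa [FormalMultilinearSeries.norm_apply_eq_norm_coef] using
      P.summable_norm_mul_pow (r := 1) ((ENNReal.coe_lt_coe.2 hR1).trans_le hf.r_le)
  · have hz' : z ∈ eball (0 : ℂ) R := by
      rw [mem_eball, edist_zero_right, ← ofReal_norm,
        ENNReal.ofReal_lt_iff_lt_toReal (norm_nonneg _) ENNReal.coe_ne_top, ENNReal.coe_toReal]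
      exact (mem_closedBall_zero_iff.1 hz).trans_lt hR1
    simpa [FormalMultilinearSeries.apply_eq_pow_smul_coeff, mul_comm] using hf.hasSum hz'

theorem Polynomial.sum_antidiagonal_coeff_mul_eq_coeff {p q : ℂ[X]} {c : ℕ → ℂ}
    (hc : Summable (‖c ·‖)) (hq : ∀ z ∈ closedBall (0 : ℂ) 1, q.eval z ≠ 0)
    (hpq : ∀ z ∈ closedBall (0 : ℂ) 1, HasSum (fun k => c k * z ^ k) (p.eval z / q.eval z))
    (n : ℕ) : ∑ ij ∈ antidiagonal n, q.coeff ij.1 * c ij.2 = p.coeff n := by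
  refine congrFun (eq_of_hasSum_mul_pow (f := fun z => p.eval z)
    (c := fun n => ∑ ij ∈ antidiagonal n, q.coeff ij.1 * c ij.2) ?_ ?_) n
  · filter_upwards [ball_mem_nhds (0 : ℂ) one_pos] with z hz
    have hcz : Summable fun k => ‖c k • z ^ k‖ :=
      summable_norm_smul_pow hc <| by
        simpa using summable_geometric_of_lt_one (norm_nonneg z) (mem_ball_zero_iff.1 hz)
    have hz' := ball_subset_closedBall hz
    simpa only [smul_eq_mul, coe_aeval_eq_eval, (hpq z hz').tsum_eq, mul_div_cancel₀ _ (hq z hz')]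
      using q.hasSum_antidiagonal_smul_pow hcz
  · exact Eventually.of_forall fun z => by
      simpa [mul_comm] using p.hasSum_coeff_smul_pow z

end PowerSeries

section Fourier

theorem integral_conj_exp_pow_mul_exp_pow (m k : ℕ) :
    ∫ θ in (0 : ℝ)..2 * Real.pi, (starRingEnd ℂ) (exp (θ * I)) ^ m * exp (θ * I) ^ k =
      if m = k then ((2 * Real.pi : ℝ) : ℂ) else 0 := by
  have hexp : ∀ θ : ℝ, (starRingEnd ℂ) (exp (θ * I)) ^ m * exp (θ * I) ^ k =
      exp (((k : ℂ) - m) * I * θ) := fun θ => by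
    rw [← exp_conj, ← exp_nat_mul, ← exp_nat_mul, ← exp_add]
    congr 1
    simp only [map_mul, conj_ofReal, conj_I]
    ring
  simp_rw [hexp]
  split_ifs with hmk
  · simp [hmk]
  · have hne : ((k : ℂ) - m) * I ≠ 0 :=
      mul_ne_zero (sub_ne_zero.2 (Nat.cast_injective.ne (Ne.symm hmk))) I_ne_zero
    have h2pi := exp_int_mul_two_pi_mul_I ((k : ℤ) - m)
    push_cast at h2pi
    rw [integral_exp_mul_complex hne, ofReal_zero, mul_zero, exp_zero, div_eq_zero_iff,
      sub_eq_zero, ← h2pi]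
    left
    push_cast
    ring_nf

theorem intervalIntegral.hasSum_integral_of_norm_le {ι E : Type*} [Countable ι]
    [NormedAddCommGroup E] [NormedSpace ℝ E] {F : ι → ℝ → E} {f : ℝ → E} {a b : ℝ}
    (bound : ι → ℝ) (hF : ∀ i, Continuous (F i)) (hbound : ∀ i t, ‖F i t‖ ≤ bound i)
    (hsum : Summable bound) (hf : ∀ t, HasSum (F · t) (f t)) :
    HasSum (fun i => ∫ t in a..b, F i t) (∫ t in a..b, f t) :=
  intervalIntegral.hasSum_integral_of_dominated_convergence (fun i _ => bound i)
    (fun i => (hF i).aestronglyMeasurable) (fun i => ae_of_all _ fun t _ => hbound i t)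
    (ae_of_all _ fun _ _ => hsum) intervalIntegrable_const (ae_of_all _ fun t _ => hf t)

variable {c v : ℕ → ℂ} {g : ℝ → ℂ}

theorem integral_mul_exp_pow_of_hasSum (hc : Summable (‖c ·‖))
    (hg : ∀ θ : ℝ, HasSum (fun m => c m * (starRingEnd ℂ) (exp (θ * I)) ^ m) (g θ)) (k : ℕ) :
    ∫ θ in (0 : ℝ)..2 * Real.pi, g θ * exp (θ * I) ^ k = 2 * Real.pi * c k := by
  have hsum := intervalIntegral.hasSum_integral_of_norm_le (a := 0) (b := 2 * Real.pi)
    (F := fun m θ => c m * (starRingEnd ℂ) (exp (θ * I)) ^ m * exp (θ * I) ^ k)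
    (fun m => ‖c m‖) (fun m => by fun_prop) (fun m θ => by simp [norm_exp_ofReal_mul_I]) hc
    fun θ => (hg θ).mul_right _
  simp_rw [mul_assoc, intervalIntegral.integral_const_mul,
    integral_conj_exp_pow_mul_exp_pow, mul_ite, mul_zero] at hsum
  rw [← hsum.tsum_eq, tsum_eq_single k fun j hj => if_neg hj, if_pos rfl]
  push_cast
  ring

theorem integral_mul_of_hasSum (hc : Summable (‖c ·‖)) (hv : Summable (‖v ·‖)) {h : ℝ → ℂ}
    (hg : ∀ θ : ℝ, HasSum (fun m => c m * (starRingEnd ℂ) (exp (θ * I)) ^ m) (g θ))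
    (hh : ∀ θ : ℝ, HasSum (fun k => v k * exp (θ * I) ^ k) (h θ)) :
    ∫ θ in (0 : ℝ)..2 * Real.pi, g θ * h θ = 2 * Real.pi * ∑' k, c k * v k := by
  have hg_eq : g = fun θ : ℝ => ∑' m, c m * (starRingEnd ℂ) (exp (θ * I)) ^ m :=
    funext fun θ => (hg θ).tsum_eq.symm
  have hg_cont : Continuous g := hg_eq ▸ continuous_tsum (fun m => by fun_prop) hc
    (fun m θ => by simp)
  have hg_le : ∀ θ, ‖g θ‖ ≤ ∑' m, ‖c m‖ := fun θ =>
    (hg θ).norm_le_of_bounded hc.hasSum fun m => by simp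
  have hsum := intervalIntegral.hasSum_integral_of_norm_le (a := 0) (b := 2 * Real.pi)
    (F := fun k θ => v k * (g θ * exp (θ * I) ^ k)) (fun k => ‖v k‖ * ∑' m, ‖c m‖)
    (fun k => by fun_prop) (fun k θ => by
      simpa [norm_exp_ofReal_mul_I] using mul_le_mul_of_nonneg_left (hg_le θ) (norm_nonneg _))
    (hv.mul_right _) fun θ => by
      simpa [mul_left_comm (g θ), ← mul_assoc] using (hh θ).mul_left (g θ)
  simp_rw [intervalIntegral.integral_const_mul, integral_mul_exp_pow_of_hasSum hc hg] at hsum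
  rw [← hsum.tsum_eq, ← tsum_mul_left]
  exact tsum_congr fun k => by ring

end Fourier

section Matrix

variable {m n : Type*} [Fintype m]

theorem Matrix.norm_apply_le_linfty_opNorm [Fintype n] {α : Type*} [NormedAddCommGroup α]
    (M : Matrix m n α) (i : m) (j : n) : ‖M i j‖ ≤ ‖M‖ := by
  rw [linfty_opNorm_def]
  exact_mod_cast (single_le_sum (fun _ _ => zero_le) (mem_univ j)).trans
    (le_sup (f := fun i => ∑ j, ‖M i j‖₊) (mem_univ i))

theorem HasSum.matrix_mul_apply {ι l R : Type*} [NonUnitalNonAssocSemiring R] [TopologicalSpace R]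
    [IsTopologicalSemiring R] {f : ι → Matrix l m R} {M : Matrix l m R} (hf : HasSum f M)
    (B : Matrix m n R) (i : l) (j : n) : HasSum (fun k => (f k * B) i j) ((M * B) i j) := by
  simp only [mul_apply]
  exact hasSum_sum fun k _ => (Pi.hasSum.1 (Pi.hasSum.1 hf i) k).mul_right (B k j)

theorem integral_mul_resolvent_apply [Fintype n] [DecidableEq m] {A : Matrix m m ℂ}
    (hA : Summable (‖A ^ ·‖)) (B : Matrix m n ℂ) {c : ℕ → ℂ} (hc : Summable (‖c ·‖)) {g : ℝ → ℂ}
    (hg : ∀ θ : ℝ, HasSum (fun k => c k * (starRingEnd ℂ) (exp (θ * I)) ^ k) (g θ))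
    (i : m) (j : n) :
    ∫ θ in (0 : ℝ)..2 * Real.pi, g θ * ((1 - exp (θ * I) • A)⁻¹ * B) i j =
      2 * Real.pi * ((∑' k, c k • A ^ k) * B) i j := by
  have hv : Summable fun k => ‖(A ^ k * B : Matrix m n ℂ) i j‖ :=
    (hA.mul_right ‖B‖).of_nonneg_of_le (fun _ => norm_nonneg _) fun k =>
      (norm_apply_le_linfty_opNorm _ i j).trans (linfty_opNorm_mul _ _)
  have htsum : ((∑' k, c k • A ^ k) * B) i j = ∑' k, c k * (A ^ k * B) i j := by
    have h := (summable_norm_smul_pow hc hA).of_norm.hasSum.matrix_mul_apply B i j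
    simp only [smul_mul, Matrix.smul_apply, smul_eq_mul] at h
    exact h.tsum_eq.symm
  rw [htsum]
  refine integral_mul_of_hasSum hc hv hg fun θ => ?_
  rw [nonsing_inv_eq_ringInverse]
  simpa [smul_mul, mul_comm] using
    (hasSum_smul_pow_ringInverse_one_sub hA (z := exp (θ * I)) (by simp)).matrix_mul_apply B i j

end Matrix

theorem markov_parameter_of_rational_W_general
    {n : ℕ}
    (A : Matrix (Fin n) (Fin n) ℂ) (B : Matrix (Fin n) (Fin 1) ℂ)
    (hA : ∀ μ ∈ spectrum ℂ A, ‖μ‖ < 1)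
    (a b : Polynomial ℂ)
    (ha : ∀ z ∈ Metric.closedBall (0:ℂ) 1, a.eval z ≠ 0)
    (W : ℂ → ℂ)
    (hW : ∀ z ∈ Metric.closedBall (0:ℂ) 1, W z = b.eval z / a.eval z) :
    IsUnit (Polynomial.aeval A (a.map (starRingEnd ℂ))) ∧
      (Matrix.of fun i j =>
        (1 / (2 * Real.pi) : ℂ) * ∫ θ in (0:ℝ)..(2 * Real.pi),
          (starRingEnd ℂ) (W (Complex.exp (θ * Complex.I))) *
            (((1 - Complex.exp (θ * Complex.I) • A)⁻¹ * B :
              Matrix (Fin n) (Fin 1) ℂ) i j)) =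
      Polynomial.aeval A (b.map (starRingEnd ℂ)) *
        (Polynomial.aeval A (a.map (starRingEnd ℂ)))⁻¹ * B := by
  have ha' : ∀ z ∈ closedBall (0 : ℂ) 1, (a.map (starRingEnd ℂ)).eval z ≠ 0 := fun z hz => by
    have := ha (starRingEnd ℂ z) (by simpa using hz)
    rwa [← map_ne_zero (starRingEnd ℂ), ← eval_map_conj, conj_conj] at this
  have hpow := summable_norm_pow_of_forall_spectrum_norm_lt_one hA
  have hunit := isUnit_aeval_of_eval_ne_zero_on_spectrum fun z hz =>
    ha' z (mem_closedBall_zero_iff.2 (hA z hz).le)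
  obtain ⟨c, hc, hcW⟩ := exists_summable_hasSum_div _ _ ha'
  refine ⟨hunit, ?_⟩
  rw [nonsing_inv_eq_ringInverse, aeval_mul_inverse_eq_tsum_smul_pow
    (summable_norm_smul_pow hc hpow) (sum_antidiagonal_coeff_mul_eq_coeff hc ha' hcW) hunit]
  ext i j
  rw [of_apply, integral_mul_resolvent_apply hpow B hc (fun θ => ?_), ← mul_assoc]
  · rw [one_div_mul_cancel (by simp [Real.pi_ne_zero]), one_mul]
    -- the two sums reach the topology on matrices through different instance paths
    rfl
  · rw [hW _ (by simp), map_div₀, ← eval_map_conj, ← eval_map_conj]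
    exact hcW _ (by simp)

/-- For polynomials `a, b` with `a` nonvanishing on the closed unit disc and
`W = b/a`, the matrix `ā(A)` is invertible and
`(1/2π) ∫₀^{2π} conj(W(e^{iθ})) (I − e^{iθ}A)⁻¹ B dθ = b̄(A) ā(A)⁻¹ B`,
where `p̄` denotes the polynomial with conjugated coefficients. -/
theorem markov_parameter_of_rational_W
    {n : ℕ} (hn : 1 ≤ n)
    (A : Matrix (Fin n) (Fin n) ℂ) (B : Matrix (Fin n) (Fin 1) ℂ)
    (hA : ∀ μ ∈ spectrum ℂ A, ‖μ‖ < 1)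
    (a b : Polynomial ℂ)
    (ha : ∀ z ∈ Metric.closedBall (0:ℂ) 1, a.eval z ≠ 0)
    (W : ℂ → ℂ)
    (hW : ∀ z ∈ Metric.closedBall (0:ℂ) 1, W z = b.eval z / a.eval z) :
    IsUnit (Polynomial.aeval A (a.map (starRingEnd ℂ))) ∧
      (Matrix.of fun i j =>
        (1 / (2 * Real.pi) : ℂ) * ∫ θ in (0:ℝ)..(2 * Real.pi),
          (starRingEnd ℂ) (W (Complex.exp (θ * Complex.I))) *
            (((1 - Complex.exp (θ * Complex.I) • A)⁻¹ * B :
              Matrix (Fin n) (Fin 1) ℂ) i j)) =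
      Polynomial.aeval A (b.map (starRingEnd ℂ)) *
        (Polynomial.aeval A (a.map (starRingEnd ℂ)))⁻¹ * B :=
  markov_parameter_of_rational_W_general A B hA a b ha W hW
end
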